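/- arXiv:2006.14969 — 3 statements merged into one kernel-verified Lean document; each statement's English description precedes it below -/
import Mathlib

section
/- Property-free characterization of robust hyperproperty preservation (Lemma 1): Let τ0 : Set TraceS → Set TraceT and let τ : Set (Set TraceS) → Set (Set TraceT) be its lift to hyperproperties by image, τ H = τ0 '' H. Then the compiler comp is RHP^τ if and only if for every source program P and every target context CT there exists a source context CS such that behT CT (comp P) = τ0 (behS CS P). -/
/-- `comp` is `RHP^τ`: for every source program `P` and every source hyperproperty `H`,
if `P` robustly satisfies `H` in the source, then `comp P` robustly satisfies `τ H`
in the target. -/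
def RHP {PrgS PrgT CtxS CtxT TraceS TraceT : Type}
    (behS : CtxS → PrgS → Set TraceS) (behT : CtxT → PrgT → Set TraceT)
    (comp : PrgS → PrgT) (τ : Set (Set TraceS) → Set (Set TraceT)) : Prop :=
  ∀ (P : PrgS) (H : Set (Set TraceS)),
    (∀ CS, behS CS P ∈ H) → ∀ CT, behT CT (comp P) ∈ τ H

/-- Lemma 1 (property-free characterization of robust hyperproperty preservation). -/
theorem property_free_RHP {PrgS PrgT CtxS CtxT TraceS TraceT : Type}
    (behS : CtxS → PrgS → Set TraceS) (behT : CtxT → PrgT → Set TraceT)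
    (comp : PrgS → PrgT) (τ0 : Set TraceS → Set TraceT) :
    RHP behS behT comp (fun H => τ0 '' H) ↔
      ∀ (P : PrgS) (CT : CtxT), ∃ CS : CtxS, behT CT (comp P) = τ0 (behS CS P) := by
  constructor
  · intro h P CT
    have := h P (Set.range (fun CS => behS CS P)) (fun CS => ⟨CS, rfl⟩) CT
    obtain ⟨b, ⟨CS, rfl⟩, hb⟩ := this
    exact ⟨CS, hb.symm⟩
  · intro h P H hH CT
    obtain ⟨CS, hCS⟩ := h P CT
    exact ⟨behS CS P, hH CS, hCS.symm⟩
end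

section
/- Minimality of the explicit interpretation map: for every α : Set (Set TraceS) → Set (Set TraceT) such that the compiler comp is RHP^α, and for every source hyperproperty H, we have τ̃ H ⊆ α H, where τ̃ is the explicitly defined map τ̃ H = { π : Set TraceT | ∃ (CT : CtxT) (P : PrgS), (∀ CS, behS CS P ∈ H) ∧ π = behT CT (comp P) }. -/
/-- The explicit interpretation map `τ̃`. -/
def tauTilde {PrgS PrgT CtxS CtxT TraceS TraceT : Type}
    (behS : CtxS → PrgS → Set TraceS) (behT : CtxT → PrgT → Set TraceT)
    (comp : PrgS → PrgT) (H : Set (Set TraceS)) : Set (Set TraceT) :=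
  { π : Set TraceT | ∃ (CT : CtxT) (P : PrgS),
      (∀ CS, behS CS P ∈ H) ∧ π = behT CT (comp P) }

/-- Minimality of the explicit interpretation map `τ̃`. -/
theorem tauTilde_minimal {PrgS PrgT CtxS CtxT TraceS TraceT : Type}
    (behS : CtxS → PrgS → Set TraceS) (behT : CtxT → PrgT → Set TraceT)
    (comp : PrgS → PrgT)
    (α : Set (Set TraceS) → Set (Set TraceT)) (hα : RHP behS behT comp α) :
    ∀ H : Set (Set TraceS), tauTilde behS behT comp H ⊆ α H := by
  intro H π hπ
  obtain ⟨CT, P, hP, rfl⟩ := hπ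
  exact hα P H hP CT
end

section
/- RHP by back-translation (Remark 1): Let τ0 : Set TraceS → Set TraceT and let τ : Set (Set TraceS) → Set (Set TraceT) be its lift by image, τ H = τ0 '' H. If there exists a back-translation function bk : CtxT → PrgS → CtxS such that for every target context CT and every source program P, behT CT (comp P) = τ0 (behS (bk CT P) P), then the compiler comp is RHP^τ. -/
/-- Remark 1: RHP by back-translation. -/
theorem rhp_by_backtranslation {PrgS PrgT CtxS CtxT TraceS TraceT : Type}
    (behS : CtxS → PrgS → Set TraceS) (behT : CtxT → PrgT → Set TraceT)
    (comp : PrgS → PrgT) (τ0 : Set TraceS → Set TraceT)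
    (bk : CtxT → PrgS → CtxS)
    (hbk : ∀ (CT : CtxT) (P : PrgS), behT CT (comp P) = τ0 (behS (bk CT P) P)) :
    RHP behS behT comp (fun H => τ0 '' H) := by
  intro P H hH CT
  exact ⟨_, hH (bk CT P), (hbk CT P).symm⟩
end
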